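/- Let 𝔛 be a symmetric association scheme of class d ≥ 2 such that θ*_0, θ*_1, …, θ*_d are mutually distinct. Then the following are equivalent: (1) 𝔛 is a Q-polynomial scheme with respect to E_1, i.e., Q-polynomial with respect to some ordering E_0, E_1, E_{i_2}, …, E_{i_d}; (2) there exists l ∈ {2, 3, …, d} such that for every i ∈ {1, 2, …, d}, ∏_{j=1, j≠i}^d (θ*_0 − θ*_j)/(θ*_i − θ*_j) = −p_i(l). Moreover, if (2) holds then l = i_d, the last index of the Q-polynomial ordering. -/

import Mathlib

open Matrix BigOperators Finset

/-- A symmetric association scheme of class `d` on a finite vertex set `V`,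
bundled together with its adjacency matrices, primitive idempotents,
eigenmatrices `P`, `Q` and Krein parameters. -/
structure SymmAssocScheme (d : ℕ) (V : Type*) [Fintype V] [DecidableEq V] where
  /-- the relations `R_0, …, R_d` -/
  R : Fin (d + 1) → Set (V × V)
  R_nonempty : ∀ i, (R i).Nonempty
  R_zero : R 0 = {p : V × V | p.1 = p.2}
  R_cover : ∀ p : V × V, ∃ i, p ∈ R i
  R_disjoint : ∀ i j, i ≠ j → R i ∩ R j = ∅
  R_symm : ∀ i, ∀ x y : V, (x, y) ∈ R i → (y, x) ∈ R i
  /-- the intersection numbers `p_{ij}^k` -/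
  pnum : Fin (d + 1) → Fin (d + 1) → Fin (d + 1) → ℕ
  pnum_spec : ∀ i j k, ∀ x y : V, (x, y) ∈ R k →
    pnum i j k = {z : V | (x, z) ∈ R i ∧ (z, y) ∈ R j}.ncard
  /-- the adjacency matrices `A_0, …, A_d` -/
  A : Fin (d + 1) → Matrix V V ℂ
  A_of_mem : ∀ i, ∀ x y : V, (x, y) ∈ R i → A i x y = 1
  A_of_not_mem : ∀ i, ∀ x y : V, (x, y) ∉ R i → A i x y = 0
  /-- the primitive idempotents `E_0, …, E_d` -/
  E : Fin (d + 1) → Matrix V V ℂ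
  E_zero : E 0 = (Fintype.card V : ℂ)⁻¹ • Matrix.of (fun _ _ => (1 : ℂ))
  E_sum : ∑ i, E i = (1 : Matrix V V ℂ)
  E_mul : ∀ i j, E i * E j = if i = j then E i else 0
  E_ne_zero : ∀ i, E i ≠ 0
  /-- the first eigenmatrix: `P i j = p_i(j)` -/
  P : Fin (d + 1) → Fin (d + 1) → ℝ
  /-- the second eigenmatrix: `Q i j = q_i(j)`; in particular `θ*_j = Q 1 j` -/
  Q : Fin (d + 1) → Fin (d + 1) → ℝ
  A_eq : ∀ i, A i = ∑ j, (P i j : ℂ) • E j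
  E_eq : ∀ i, E i = (Fintype.card V : ℂ)⁻¹ • ∑ j, (Q i j : ℂ) • A j
  /-- the Krein parameters `q_{ij}^k` -/
  krein : Fin (d + 1) → Fin (d + 1) → Fin (d + 1) → ℝ
  krein_spec : ∀ i j, Matrix.hadamard (E i) (E j) =
    (Fintype.card V : ℂ)⁻¹ • ∑ k, (krein i j k : ℂ) • E k
  krein_nonneg : ∀ i j k, 0 ≤ krein i j k

namespace SymmAssocScheme

variable {d : ℕ} {V : Type*} [Fintype V] [DecidableEq V]

/-- the `h`-fold Hadamard power `E_1^{∘h}` of `E_1`, with `E_1^{∘0} = J`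
the all-ones matrix. -/
noncomputable def hadPowE1 (S : SymmAssocScheme d V) : ℕ → Matrix V V ℂ
  | 0 => Matrix.of fun _ _ => 1
  | n + 1 => Matrix.hadamard (hadPowE1 S n) (S.E 1)

/-- `N h` is the set of indices `j` such that `E_j` is a component of `E_1^{∘h}`
(i.e. `E_j · E_1^{∘h} ≠ 0`) but not a component of `E_1^{∘l}` for any `l < h`. -/
def N (S : SymmAssocScheme d V) (h : ℕ) : Set (Fin (d + 1)) :=
  {j | S.E j * S.hadPowE1 h ≠ 0 ∧ ∀ l < h, S.E j * S.hadPowE1 l = 0}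

/-- `𝔛` is `Q`-polynomial with respect to the ordering `E_{σ 0}, E_{σ 1}, …, E_{σ d}`:
for each `h` there is a polynomial `v*_h` of degree exactly `h` with
`q_{σ h}(j) = v*_h(q_1(j))` for all `j`. -/
def IsQPolyOrdering (S : SymmAssocScheme d V) (σ : Equiv.Perm (Fin (d + 1))) : Prop :=
  ∀ h : Fin (d + 1), ∃ v : Polynomial ℝ, v.degree = (h : ℕ) ∧
    ∀ j, S.Q (σ h) j = v.eval (S.Q 1 j)

/-- `𝔛` is `Q`-polynomial with respect to `E_1`: it is `Q`-polynomial with respect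
to some ordering of the form `E_0, E_1, E_{i_2}, …, E_{i_d}`. -/
def IsQPolyE1 (S : SymmAssocScheme d V) : Prop :=
  ∃ σ : Equiv.Perm (Fin (d + 1)), σ 0 = 0 ∧ σ 1 = 1 ∧ S.IsQPolyOrdering σ

/-- `𝔛` is `P`-polynomial with respect to the ordering `A_{σ 0}, A_{σ 1}, …, A_{σ d}`. -/
def IsPPolyOrdering (S : SymmAssocScheme d V) (σ : Equiv.Perm (Fin (d + 1))) : Prop :=
  ∀ h : Fin (d + 1), ∃ v : Polynomial ℝ, v.degree = (h : ℕ) ∧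
    ∀ j, S.P (σ h) j = v.eval (S.P 1 j)

/-- `𝔛` is `P`-polynomial with respect to `A_1`. -/
def IsPPolyA1 (S : SymmAssocScheme d V) : Prop :=
  ∃ σ : Equiv.Perm (Fin (d + 1)), σ 0 = 0 ∧ σ 1 = 1 ∧ S.IsPPolyOrdering σ

/-- the ratio `K_i = ∏_{j=1, j≠i}^d (θ*_0 − θ*_j)/(θ*_i − θ*_j)`,
where `θ*_j = q_1(j)`. -/
noncomputable def K (S : SymmAssocScheme d V) (i : Fin (d + 1)) : ℝ :=
  ∏ j ∈ Finset.univ.filter (fun j => j ≠ 0 ∧ j ≠ i),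
    (S.Q 1 0 - S.Q 1 j) / (S.Q 1 i - S.Q 1 j)

end SymmAssocScheme

/-!
Let `λ_h(j)` be the coefficient of `E_j` in the Hadamard power `E_1^{∘h}`. Expanding
`E_1^{∘h}` in the `A_k` gives `λ_h(j) = |X|^{-h} ∑_k (θ*_k)^h p_k(j)`, so for a polynomial `v`
the sum `∑_k v(θ*_k) p_k(j)` is a combination of `λ_0(j), …, λ_{deg v}(j)` with top term
`lc(v) |X|^{deg v} λ_{deg v}(j)`, while it equals `|X| δ_{ij}` when `v(θ*_k) = q_i(k)` for all `k`.
Comparing top terms, an ordering `σ` is `Q`-polynomial iff every `E_{σ h}` occurs in `E_1^{∘h}`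
but in no lower Hadamard power, i.e. `σ h ∈ N h`.

By Lagrange interpolation, `∑_i (θ*_i)^t / ∏_{j ≠ i} (θ*_i - θ*_j) = 0` for `t < d`, so `1` and
the `-K_i` are the entries of the unique vector `u` with `u_0 = 1` orthogonal to
`1, θ*, …, (θ*)^{d-1}`. As `p_0(l) = 1`, condition (2) says `p_·(l) = u`, i.e. `λ_t(l) = 0` for
all `t < d`.

The Krein parameters are nonnegative, hence so are all `λ_h(j)`, and `λ_{h+1}(j) ≠ 0` iff
`λ_h(i) ≠ 0` and `q_{i1}^j ≠ 0` for some `i`. If `λ_t(l) = 0` for `t < d`, then `λ_d(l) ≠ 0`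
(Vandermonde), and a Krein walk `0 = w_0, w_1, …, w_d = l` must meet each `E_{w_h}` for the first
time at step `h`: otherwise it would reach `l` in fewer than `d` steps. So `h ↦ w_h` is an ordering
with `w_h ∈ N h`, and in any such ordering `l` can only come last.
-/

namespace Lagrange

open Polynomial

theorem prod_filter_div_eq_neg {ι F : Type*} [Fintype ι] [DecidableEq ι] [Field F] {θ : ι → F}
    (hθ : Function.Injective θ) {a i : ι} (hi : i ≠ a) :
    ∏ j ∈ univ.filter (fun j => j ≠ a ∧ j ≠ i), (θ a - θ j) / (θ i - θ j) =
      -((∏ j ∈ univ.erase a, (θ a - θ j)) / ∏ j ∈ univ.erase i, (θ i - θ j)) := by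
  set s := univ.filter (fun j => j ≠ a ∧ j ≠ i)
  have ha : univ.erase a = insert i s := by ext j; by_cases j = i <;> simp [s, *]
  have hi' : univ.erase i = insert a s := by ext j; by_cases j = a <;> simp [s, *, hi.symm]
  have hs : ∏ j ∈ s, (θ i - θ j) ≠ 0 :=
    prod_ne_zero_iff.mpr fun j hj => sub_ne_zero.mpr (hθ.ne (mem_filter.mp hj).2.2.symm)
  have hia : θ i - θ a ≠ 0 := sub_ne_zero.mpr (hθ.ne hi)
  rw [prod_div_distrib, ha, hi', prod_insert (by simp [s]), prod_insert (by simp [s])]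
  field_simp
  ring

variable {F : Type*} [Field F] {d : ℕ} {θ : Fin (d + 1) → F}

theorem sum_pow_div_prod_sub_eq_zero (hθ : Function.Injective θ) {t : ℕ} (ht : t < d) :
    ∑ i, θ i ^ t / ∏ j ∈ univ.erase i, (θ i - θ j) = 0 := by
  have h := coeff_eq_sum (s := univ) hθ.injOn (P := X ^ t)
    (by rw [degree_X_pow, card_univ, Fintype.card_fin]; exact_mod_cast ht.trans d.lt_succ_self)
  simpa [coeff_X_pow, ht.ne'] using h.symm

theorem eq_of_sum_pow_mul_eq (hθ : Function.Injective θ) {u v : Fin (d + 1) → F}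
    (h0 : u 0 = v 0) (h : ∀ t < d, ∑ k, θ k ^ t * u k = ∑ k, θ k ^ t * v k) : u = v := by
  have hsucc : (fun k : Fin d => u k.succ - v k.succ) = 0 := by
    refine Matrix.eq_zero_of_forall_pow_sum_mul_pow_eq_zero (f := fun k => θ k.succ)
      (hθ.comp (Fin.succ_injective d)) fun t => ?_
    have := h t t.isLt
    simp only [Fin.sum_univ_succ, h0] at this
    simp only [sub_mul, sum_sub_distrib, mul_comm (u _), mul_comm (v _)]
    linear_combination this
  funext k
  cases k using Fin.cases with
  | zero => exact h0
  | succ k => exact sub_eq_zero.mp (congrFun hsucc k)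

theorem forall_prod_div_eq_neg_iff (hθ : Function.Injective θ) {u : Fin (d + 1) → F}
    (hu : u 0 = 1) :
    (∀ i, i ≠ 0 → ∏ j ∈ univ.filter (fun j => j ≠ 0 ∧ j ≠ i), (θ 0 - θ j) / (θ i - θ j) = -u i) ↔
      ∀ t < d, ∑ k, θ k ^ t * u k = 0 := by
  set c : Fin (d + 1) → F :=
    fun k => (∏ j ∈ univ.erase 0, (θ 0 - θ j)) / ∏ j ∈ univ.erase k, (θ k - θ j)
  have hc0 : c 0 = 1 := div_self <| prod_ne_zero_iff.mpr fun j hj =>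
    sub_ne_zero.mpr (hθ.ne (mem_erase.mp hj).1.symm)
  have hc : ∀ t < d, ∑ k, θ k ^ t * c k = 0 := fun t ht => by
    simp_rw [c, mul_div_assoc', mul_comm (θ _ ^ t), mul_div_assoc, ← mul_sum,
      sum_pow_div_prod_sub_eq_zero hθ ht, mul_zero]
  calc (∀ i, i ≠ 0 → ∏ j ∈ univ.filter (fun j => j ≠ 0 ∧ j ≠ i), (θ 0 - θ j) / (θ i - θ j) = -u i)
      ↔ u = c := by
        refine ⟨fun h => funext fun k => ?_, by rintro rfl i hi; exact prod_filter_div_eq_neg hθ hi⟩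
        by_cases hk : k = 0
        · rw [hk, hu, hc0]
        · exact neg_inj.mp ((h k hk).symm.trans (prod_filter_div_eq_neg hθ hk))
    _ ↔ ∀ t < d, ∑ k, θ k ^ t * u k = 0 := by
        refine ⟨fun h => h ▸ hc, fun h => eq_of_sum_pow_mul_eq hθ (hu.trans hc0.symm) ?_⟩
        exact fun t ht => by rw [h t ht, hc t ht]

end Lagrange

namespace SymmAssocScheme

variable {d : ℕ} {V : Type*} [Fintype V] [DecidableEq V] (S : SymmAssocScheme d V)

local notation "n" => (Fintype.card V : ℝ)

theorem card_ne_zero (S : SymmAssocScheme d V) : (Fintype.card V : ℝ) ≠ 0 := by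
  have : Nonempty V := ⟨(S.R_nonempty 0).some.1⟩
  exact_mod_cast Fintype.card_ne_zero

theorem A_apply {k : Fin (d + 1)} {x y : V} (h : (x, y) ∈ S.R k) (i : Fin (d + 1)) :
    S.A i x y = if i = k then 1 else 0 := by
  split_ifs with hik
  · exact S.A_of_mem i x y (hik ▸ h)
  · refine S.A_of_not_mem i x y fun hi => ?_
    simpa [S.R_disjoint i k hik] using Set.mem_inter hi h

theorem eq_sum_smul_A {M : Matrix V V ℂ} {f : Fin (d + 1) → ℂ}
    (hM : ∀ k x y, (x, y) ∈ S.R k → M x y = f k) : M = ∑ k, f k • S.A k := by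
  ext x y
  obtain ⟨k, hk⟩ := S.R_cover (x, y)
  simp [hM k x y hk, Matrix.sum_apply, S.A_apply hk]

theorem E_apply {k : Fin (d + 1)} {x y : V} (h : (x, y) ∈ S.R k) (j : Fin (d + 1)) :
    S.E j x y = (n⁻¹ * S.Q j k : ℝ) := by
  simp [S.E_eq j, Matrix.sum_apply, S.A_apply h]

theorem E_mul_sum_smul_E (c : Fin (d + 1) → ℂ) (i : Fin (d + 1)) :
    S.E i * ∑ j, c j • S.E j = c i • S.E i := by
  simp [mul_sum, S.E_mul]

theorem eq_of_smul_E_eq {a b : ℂ} {i : Fin (d + 1)} (h : a • S.E i = b • S.E i) : a = b :=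
  smul_left_injective ℂ (S.E_ne_zero i) h

theorem coeff_eq_of_sum_smul_E_eq {c c' : Fin (d + 1) → ℂ}
    (h : ∑ j, c j • S.E j = ∑ j, c' j • S.E j) : c = c' :=
  funext fun i => S.eq_of_smul_E_eq <| by
    rw [← S.E_mul_sum_smul_E c, ← S.E_mul_sum_smul_E c', h]

theorem A_zero : S.A 0 = 1 := by
  ext x y
  by_cases hxy : x = y
  · subst hxy
    simpa using S.A_of_mem 0 x x (by simp [S.R_zero])
  · simpa [hxy] using S.A_of_not_mem 0 x y (by simpa [S.R_zero] using hxy)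

theorem P_zero (j : Fin (d + 1)) : S.P 0 j = 1 := by
  have := S.coeff_eq_of_sum_smul_E_eq (c := fun j => (S.P 0 j : ℂ)) (c' := fun _ => 1)
    (by simp only [← S.A_eq, S.A_zero, one_smul, S.E_sum])
  exact_mod_cast congrFun this j

theorem E_mul_A (j k : Fin (d + 1)) : S.E j * S.A k = (S.P k j : ℂ) • S.E j := by
  rw [S.A_eq k, S.E_mul_sum_smul_E]

theorem sum_Q_mul_P (i j : Fin (d + 1)) :
    ∑ k, S.Q i k * S.P k j = if i = j then n else 0 := by
  have key : S.E j * S.E i =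
      ((Fintype.card V : ℂ)⁻¹ * ((∑ k, S.Q i k * S.P k j : ℝ) : ℂ)) • S.E j := by
    simp only [S.E_eq i, mul_smul_comm, mul_sum, E_mul_A, smul_smul, ← sum_smul]
    push_cast
    simp only [mul_sum, mul_comm]
  have hc := S.eq_of_smul_E_eq (b := if i = j then 1 else 0) <| by
    rw [← key, S.E_mul, ite_smul, one_smul, zero_smul]
    simp only [eq_comm]
  have hn : (Fintype.card V : ℂ) ≠ 0 := by exact_mod_cast S.card_ne_zero
  split_ifs at hc ⊢
  · exact_mod_cast (inv_mul_eq_one₀ hn).mp hc |>.symm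
  · exact_mod_cast (mul_eq_zero.mp hc).resolve_left (inv_ne_zero hn)

/-- `λ_h(j)`, the coefficient of `E_j` in `E_1^{∘h}` (see `hadPowE1_eq_sum`), in closed form. -/
noncomputable def hadPowCoeff (h : ℕ) (j : Fin (d + 1)) : ℝ :=
  n⁻¹ ^ h * ∑ k, S.Q 1 k ^ h * S.P k j

theorem sum_pow_mul_P (h : ℕ) (j : Fin (d + 1)) :
    ∑ k, S.Q 1 k ^ h * S.P k j = n ^ h * S.hadPowCoeff h j := by
  rw [hadPowCoeff, ← mul_assoc, ← mul_pow, mul_inv_cancel₀ S.card_ne_zero, one_pow, one_mul]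

theorem hadPowE1_apply {k : Fin (d + 1)} {x y : V} (hk : (x, y) ∈ S.R k) (h : ℕ) :
    S.hadPowE1 h x y = ((n⁻¹ * S.Q 1 k) ^ h : ℝ) := by
  induction h with
  | zero => simp [hadPowE1]
  | succ h ih => simp [hadPowE1, ih, S.E_apply hk, pow_succ]

theorem hadPowE1_eq_sum (h : ℕ) : S.hadPowE1 h = ∑ j, (S.hadPowCoeff h j : ℂ) • S.E j := by
  rw [S.eq_sum_smul_A fun k x y hk => S.hadPowE1_apply hk h]
  simp only [S.A_eq, smul_sum, smul_smul]
  rw [sum_comm]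
  refine sum_congr rfl fun j _ => ?_
  rw [← sum_smul, hadPowCoeff, mul_sum]
  push_cast
  simp only [mul_pow, mul_assoc]

theorem E_mul_hadPowE1 (j : Fin (d + 1)) (h : ℕ) :
    S.E j * S.hadPowE1 h = (S.hadPowCoeff h j : ℂ) • S.E j := by
  rw [hadPowE1_eq_sum, E_mul_sum_smul_E]

theorem mem_N_iff {h : ℕ} {j : Fin (d + 1)} :
    j ∈ S.N h ↔ S.hadPowCoeff h j ≠ 0 ∧ ∀ t < h, S.hadPowCoeff t j = 0 := by
  simp [N, E_mul_hadPowE1, S.E_ne_zero]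

theorem hadPowCoeff_zero (j : Fin (d + 1)) : S.hadPowCoeff 0 j = if j = 0 then n else 0 := by
  have hn : (Fintype.card V : ℂ) ≠ 0 := by exact_mod_cast S.card_ne_zero
  have := S.coeff_eq_of_sum_smul_E_eq (c := fun j => (S.hadPowCoeff 0 j : ℂ))
    (c' := fun j => ((if j = 0 then n else 0 : ℝ) : ℂ)) <| by
    rw [← S.hadPowE1_eq_sum 0, Fintype.sum_eq_single 0 fun j hj => by simp [hj]]
    ext x y
    simp [hadPowE1, S.E_zero, hn]
  exact_mod_cast congrFun this j

theorem hadPowCoeff_one (j : Fin (d + 1)) : S.hadPowCoeff 1 j = if j = 1 then 1 else 0 := by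
  have := S.coeff_eq_of_sum_smul_E_eq (c := fun j => (S.hadPowCoeff 1 j : ℂ))
    (c' := fun j => ((if j = 1 then 1 else 0 : ℝ) : ℂ)) <| by
    rw [← S.hadPowE1_eq_sum 1]
    ext x y
    simp [hadPowE1, hadamard_apply]
  exact_mod_cast congrFun this j

theorem N_zero : S.N 0 = {0} := by
  ext j
  by_cases hj : j = 0 <;> simp [mem_N_iff, hadPowCoeff_zero, hj, S.card_ne_zero]

theorem N_one (hd : 1 ≤ d) : S.N 1 = {1} := by
  have h10 : (1 : Fin (d + 1)) ≠ 0 := by simp [Fin.ext_iff]; omega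
  ext j
  by_cases hj : j = 1 <;> simp [mem_N_iff, hadPowCoeff_zero, hadPowCoeff_one, hj, h10]

theorem hadPowCoeff_succ (h : ℕ) (m : Fin (d + 1)) :
    S.hadPowCoeff (h + 1) m = n⁻¹ * ∑ j, S.hadPowCoeff h j * S.krein j 1 m := by
  have := S.coeff_eq_of_sum_smul_E_eq (c := fun m => (S.hadPowCoeff (h + 1) m : ℂ))
    (c' := fun m => ((n⁻¹ * ∑ j, S.hadPowCoeff h j * S.krein j 1 m : ℝ) : ℂ)) <| by
    have hsum : S.hadPowE1 (h + 1) = ∑ j, (S.hadPowCoeff h j : ℂ) • (S.E j ⊙ S.E 1) := by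
      ext x y
      simp [hadPowE1, hadPowE1_eq_sum, hadamard_apply, Matrix.sum_apply, sum_mul, mul_assoc]
    rw [← hadPowE1_eq_sum, hsum]
    simp only [S.krein_spec, smul_sum, smul_smul]
    rw [sum_comm]
    refine sum_congr rfl fun m _ => ?_
    rw [← sum_smul]
    push_cast
    simp only [mul_sum, mul_left_comm]
  exact_mod_cast congrFun this m

theorem hadPowCoeff_nonneg (h : ℕ) (j : Fin (d + 1)) : 0 ≤ S.hadPowCoeff h j := by
  induction h generalizing j with
  | zero =>
    rw [hadPowCoeff_zero]
    split_ifs <;> positivity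
  | succ h ih =>
    rw [hadPowCoeff_succ]
    exact mul_nonneg (by positivity)
      (sum_nonneg fun k _ => mul_nonneg (ih k) (S.krein_nonneg k 1 j))

theorem hadPowCoeff_succ_ne_zero_iff (h : ℕ) (m : Fin (d + 1)) :
    S.hadPowCoeff (h + 1) m ≠ 0 ↔ ∃ j, S.hadPowCoeff h j ≠ 0 ∧ S.krein j 1 m ≠ 0 := by
  rw [hadPowCoeff_succ, mul_ne_zero_iff, Ne, Ne,
    sum_eq_zero_iff_of_nonneg fun j _ =>
      mul_nonneg (S.hadPowCoeff_nonneg h j) (S.krein_nonneg j 1 m)]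
  simp [S.card_ne_zero]

theorem exists_krein_walk {h : ℕ} {j : Fin (d + 1)} (hj : S.hadPowCoeff h j ≠ 0) :
    ∃ w : ℕ → Fin (d + 1), w 0 = 0 ∧ w h = j ∧ ∀ m < h, S.krein (w m) 1 (w (m + 1)) ≠ 0 := by
  induction h generalizing j with
  | zero =>
    refine ⟨fun _ => 0, rfl, ?_, by simp⟩
    by_contra h0
    simp [hadPowCoeff_zero, Ne.symm h0] at hj
  | succ h ih =>
    obtain ⟨i, hi, hij⟩ := (S.hadPowCoeff_succ_ne_zero_iff h j).1 hj
    obtain ⟨w, hw0, hwh, hw⟩ := ih hi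
    refine ⟨Function.update w (h + 1) j, by simp [hw0], by simp, fun m hm => ?_⟩
    rcases (Nat.lt_succ_iff.1 hm).lt_or_eq with hm | rfl
    · simpa [Function.update_of_ne (show m ≠ h + 1 by omega),
        Function.update_of_ne (show m + 1 ≠ h + 1 by omega)] using hw m hm
    · simpa [hwh] using hij

theorem hadPowCoeff_walk_ne_zero {w : ℕ → Fin (d + 1)} {h : ℕ}
    (hw : ∀ m < h, S.krein (w m) 1 (w (m + 1)) ≠ 0) {a m : ℕ}
    (ha : S.hadPowCoeff a (w m) ≠ 0) {t : ℕ} (ht : m + t ≤ h) :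
    S.hadPowCoeff (a + t) (w (m + t)) ≠ 0 := by
  induction t with
  | zero => exact ha
  | succ t ih =>
    exact (S.hadPowCoeff_succ_ne_zero_iff _ _).2 ⟨w (m + t), ih (by omega), hw _ (by omega)⟩

theorem hadPowCoeff_ne_zero_of_forall_lt (hθ : Function.Injective fun j : Fin (d + 1) => S.Q 1 j)
    {l : Fin (d + 1)} (hl : ∀ t < d, S.hadPowCoeff t l = 0) : S.hadPowCoeff d l ≠ 0 := by
  intro hdl
  have hP := Matrix.eq_zero_of_forall_pow_sum_mul_pow_eq_zero hθ (v := fun k => S.P k l)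
    fun t => by
      rw [sum_congr rfl fun k _ => mul_comm _ _, sum_pow_mul_P]
      rcases (Nat.lt_succ_iff.1 t.isLt).lt_or_eq with ht | ht
      · rw [hl t ht, mul_zero]
      · rw [ht, hdl, mul_zero]
  simpa [S.P_zero] using congrFun hP 0

theorem exists_forall_mem_N (hθ : Function.Injective fun j : Fin (d + 1) => S.Q 1 j)
    {l : Fin (d + 1)} (hl : ∀ t < d, S.hadPowCoeff t l = 0) :
    ∃ σ : Equiv.Perm (Fin (d + 1)), ∀ r : Fin (d + 1), σ r ∈ S.N r := by
  obtain ⟨w, hw0, hwd, hw⟩ := S.exists_krein_walk (S.hadPowCoeff_ne_zero_of_forall_lt hθ hl)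
  have hlow : ∀ a b, a < b → b ≤ d → S.hadPowCoeff a (w b) = 0 := fun a b hab hb => by
    by_contra ha
    have := S.hadPowCoeff_walk_ne_zero hw ha (t := d - b) (by omega)
    rw [Nat.add_sub_cancel' hb, hwd] at this
    exact this (hl _ (by omega))
  have hdiag : ∀ b ≤ d, S.hadPowCoeff b (w b) ≠ 0 := fun b hb => by
    simpa using S.hadPowCoeff_walk_ne_zero hw (a := 0) (m := 0)
      (by simp [hw0, hadPowCoeff_zero, S.card_ne_zero]) (t := b) (by omega)
  have hne : ∀ a b, a < b → b ≤ d → w a ≠ w b := fun a b hab hb he =>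
    hdiag a (by omega) (he ▸ hlow a b hab hb)
  have hinj : Function.Injective fun r : Fin (d + 1) => w r := fun a b hab => by
    by_contra hab'
    rcases Nat.lt_or_gt_of_ne (Fin.val_ne_of_ne hab') with h | h
    · exact hne _ _ h (Nat.lt_succ_iff.1 b.isLt) hab
    · exact hne _ _ h (Nat.lt_succ_iff.1 a.isLt) hab.symm
  refine ⟨Equiv.ofBijective _ hinj.bijective_of_finite, fun r => S.mem_N_iff.2 ?_⟩
  have hr : (r : ℕ) ≤ d := Nat.lt_succ_iff.1 r.isLt
  exact ⟨hdiag r hr, fun t ht => hlow t r ht hr⟩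

theorem apply_last_eq_of_forall_mem_N {σ : Equiv.Perm (Fin (d + 1))}
    (hσ : ∀ r : Fin (d + 1), σ r ∈ S.N r)
    {l : Fin (d + 1)} (hl : ∀ t < d, S.hadPowCoeff t l = 0) : σ (Fin.last d) = l := by
  obtain ⟨r, rfl⟩ := σ.surjective l
  by_contra hr
  exact (S.mem_N_iff.1 (hσ r)).1 (hl r (Fin.val_lt_last fun h => hr (by rw [h])))

theorem sum_eval_mul_P {p : Polynomial ℝ} {j : Fin (d + 1)}
    (hp : ∀ t < p.natDegree, S.hadPowCoeff t j = 0) :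
    ∑ k, p.eval (S.Q 1 k) * S.P k j =
      p.leadingCoeff * n ^ p.natDegree * S.hadPowCoeff p.natDegree j := by
  simp_rw [Polynomial.eval_eq_sum_range, sum_mul]
  rw [sum_comm]
  simp_rw [mul_assoc, ← mul_sum, sum_pow_mul_P]
  rw [sum_range_succ, sum_eq_zero fun t ht => by rw [hp t (mem_range.1 ht), mul_zero, mul_zero],
    zero_add, Polynomial.leadingCoeff]

theorem IsQPolyOrdering.mem_N {σ : Equiv.Perm (Fin (d + 1))} (hσ : S.IsQPolyOrdering σ)
    (r : Fin (d + 1)) : σ r ∈ S.N r := by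
  choose v hv hQ using hσ
  have hv0 : ∀ m, v m ≠ 0 := fun m h0 => by simpa [h0] using hv m
  have hnat : ∀ m, (v m).natDegree = m := fun m => Polynomial.natDegree_eq_of_degree_eq_some (hv m)
  have hpair : ∀ m, ∑ k, (v m).eval (S.Q 1 k) * S.P k (σ r) = if m = r then n else 0 := by
    simp_rw [← hQ, sum_Q_mul_P, σ.injective.eq_iff, implies_true]
  have hlow : ∀ t < (r : ℕ), S.hadPowCoeff t (σ r) = 0 := by
    intro t
    induction t using Nat.strong_induction_on with
    | _ t ih =>
      intro ht
      have := S.sum_eval_mul_P (p := v ⟨t, ht.trans r.isLt⟩) (j := σ r)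
        (by rw [hnat]; exact fun s hs => ih s hs (hs.trans ht))
      rw [hpair, if_neg (Fin.ne_of_val_ne ht.ne), hnat] at this
      simpa [hv0, S.card_ne_zero] using this.symm
  refine S.mem_N_iff.2 ⟨fun h0 => S.card_ne_zero ?_, hlow⟩
  simpa [hpair, hnat, h0] using S.sum_eval_mul_P (p := v r) (j := σ r) (by rw [hnat]; exact hlow)

theorem isQPolyOrdering_of_forall_mem_N (hθ : Function.Injective fun j : Fin (d + 1) => S.Q 1 j)
    {σ : Equiv.Perm (Fin (d + 1))} (hσ : ∀ r : Fin (d + 1), σ r ∈ S.N r) :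
    S.IsQPolyOrdering σ := by
  intro h
  set v := Lagrange.interpolate univ (fun k => S.Q 1 k) (fun k => S.Q (σ h) k)
  have hv : ∀ k, v.eval (S.Q 1 k) = S.Q (σ h) k := fun k =>
    Lagrange.eval_interpolate_at_node _ hθ.injOn (mem_univ k)
  have hpair : ∀ j, ∑ k, v.eval (S.Q 1 k) * S.P k j = if σ h = j then n else 0 := by
    simp_rw [hv, sum_Q_mul_P, implies_true]
  have hv0 : v ≠ 0 := fun h0 => S.card_ne_zero (by simpa [h0] using (hpair (σ h)).symm)
  have hvd : v.natDegree < d + 1 := by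
    have := Lagrange.degree_interpolate_lt (s := univ) (fun k => S.Q (σ h) k) hθ.injOn
    rw [card_univ, Fintype.card_fin] at this
    exact (Polynomial.natDegree_lt_iff_degree_lt hv0).2 this
  set m : Fin (d + 1) := ⟨v.natDegree, hvd⟩
  have hlow : ∀ r : Fin (d + 1), ∀ t < (r : ℕ), S.hadPowCoeff t (σ r) = 0 :=
    fun r => (S.mem_N_iff.1 (hσ r)).2
  have hm : m = h := by
    rcases lt_trichotomy m h with hmh | hmh | hmh
    · have := S.sum_eval_mul_P (p := v) (j := σ h) fun t ht => hlow h t (ht.trans hmh)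
      rw [hpair, if_pos rfl, hlow h _ hmh, mul_zero] at this
      exact absurd this S.card_ne_zero
    · exact hmh
    · have := S.sum_eval_mul_P (p := v) (j := σ m) fun t ht => hlow m t ht
      rw [hpair, if_neg (σ.injective.ne hmh.ne)] at this
      exact absurd this.symm (mul_ne_zero (mul_ne_zero (Polynomial.leadingCoeff_ne_zero.2 hv0)
        (pow_ne_zero _ S.card_ne_zero)) (S.mem_N_iff.1 (hσ m)).1)
  refine ⟨v, ?_, fun k => (hv k).symm⟩
  rw [Polynomial.degree_eq_natDegree hv0, ← hm]

theorem isQPolyOrdering_iff (hθ : Function.Injective fun j : Fin (d + 1) => S.Q 1 j)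
    (σ : Equiv.Perm (Fin (d + 1))) :
    S.IsQPolyOrdering σ ↔ ∀ r : Fin (d + 1), σ r ∈ S.N r :=
  ⟨IsQPolyOrdering.mem_N S, S.isQPolyOrdering_of_forall_mem_N hθ⟩

theorem forall_K_eq_neg_P_iff (hθ : Function.Injective fun j : Fin (d + 1) => S.Q 1 j)
    (l : Fin (d + 1)) :
    (∀ i, i ≠ 0 → S.K i = -S.P i l) ↔ ∀ t < d, S.hadPowCoeff t l = 0 := by
  simp only [K]
  rw [Lagrange.forall_prod_div_eq_neg_iff hθ (S.P_zero l)]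
  simp [sum_pow_mul_P, S.card_ne_zero]

end SymmAssocScheme

/-- Theorem 1, main theorem. For a symmetric association scheme of
class `d ≥ 2` with `θ*_0, …, θ*_d` mutually distinct: `𝔛` is `Q`-polynomial with
respect to `E_1` iff there is `l ∈ {2, …, d}` with
`∏_{j=1,j≠i}^d (θ*_0 − θ*_j)/(θ*_i − θ*_j) = −p_i(l)` for all `i ∈ {1, …, d}`;
moreover, in that case `l = i_d`, the last index of any such `Q`-polynomial ordering. -/
theorem statement0 {d : ℕ} {V : Type*} [Fintype V] [DecidableEq V]
    (S : SymmAssocScheme d V) (hd : 2 ≤ d)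
    (hθ : Function.Injective fun j : Fin (d + 1) => S.Q 1 j) :
    (S.IsQPolyE1 ↔
      ∃ l : Fin (d + 1), 2 ≤ (l : ℕ) ∧
        ∀ i : Fin (d + 1), i ≠ 0 →
          (∏ j ∈ Finset.univ.filter (fun j => j ≠ 0 ∧ j ≠ i),
            (S.Q 1 0 - S.Q 1 j) / (S.Q 1 i - S.Q 1 j)) = -S.P i l) ∧
    (∀ l : Fin (d + 1), 2 ≤ (l : ℕ) →
      (∀ i : Fin (d + 1), i ≠ 0 →
        (∏ j ∈ Finset.univ.filter (fun j => j ≠ 0 ∧ j ≠ i),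
          (S.Q 1 0 - S.Q 1 j) / (S.Q 1 i - S.Q 1 j)) = -S.P i l) →
      ∀ σ : Equiv.Perm (Fin (d + 1)), σ 0 = 0 → σ 1 = 1 → S.IsQPolyOrdering σ →
        σ (Fin.last d) = l) := by
  have hK := S.forall_K_eq_neg_P_iff hθ
  have hQ := S.isQPolyOrdering_iff hθ
  have h1 : ((1 : Fin (d + 1)) : ℕ) = 1 := by simp; omega
  refine ⟨⟨?_, ?_⟩, ?_⟩
  · rintro ⟨σ, hσ0, hσ1, hσ⟩
    refine ⟨σ (Fin.last d), ?_, (hK _).2 ((S.mem_N_iff.1 ((hQ σ).1 hσ (Fin.last d))).2)⟩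
    have h0 : σ (Fin.last d) ≠ σ 0 :=
      σ.injective.ne (Fin.ext_iff.not.2 (by rw [Fin.val_last, Fin.val_zero]; omega))
    have h1' : σ (Fin.last d) ≠ σ 1 :=
      σ.injective.ne (Fin.ext_iff.not.2 (by rw [Fin.val_last, h1]; omega))
    rw [hσ0, Ne, Fin.ext_iff, Fin.val_zero] at h0
    rw [hσ1, Ne, Fin.ext_iff, h1] at h1'
    omega
  · rintro ⟨l, -, hl⟩
    obtain ⟨σ, hσ⟩ := S.exists_forall_mem_N hθ ((hK l).1 hl)
    refine ⟨σ, by simpa [S.N_zero] using hσ 0, ?_, (hQ σ).2 hσ⟩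
    have := hσ 1
    rwa [h1, S.N_one (by omega), Set.mem_singleton_iff] at this
  · intro l _ hl σ _ _ hσ
    exact S.apply_last_eq_of_forall_mem_N ((hQ σ).1 hσ) ((hK l).1 hl)
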